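/- arXiv:1911.01714 — 4 statements merged into one kernel-verified Lean document; each statement's English description precedes it below -/
import Mathlib

section
/- Let μ be a valuation on K[x] extending v, let φ be a key polynomial for μ, and let f ∈ K[x] be a monic non-constant polynomial. Then μ(f)/deg(f) ≤ μ(φ)/deg(φ) in Λ⊗ℚ, with equality if and only if f is μ-minimal. -/
open Polynomial Finset

variable {K : Type*} [Field K] {Λ : Type*} [AddCommGroup Λ] [LinearOrder Λ] [IsOrderedAddMonoid Λ]

/-- `v` is a valuation on the field `K` with values in `Λ∞ = WithTop Λ`. -/
def IsVal (v : K → WithTop Λ) : Prop :=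
  (∀ a, v a = ⊤ ↔ a = 0) ∧ v 1 = 0 ∧ (∀ a b, v (a * b) = v a + v b) ∧
    (∀ a b, min (v a) (v b) ≤ v (a + b))

/-- `μ` is a valuation on `K[x]` extending `v`. -/
def ExtVal (v : K → WithTop Λ) (μ : Polynomial K → WithTop Λ) : Prop :=
  (∀ f g, μ (f * g) = μ f + μ g) ∧ (∀ f g, min (μ f) (μ g) ≤ μ (f + g)) ∧
    (∀ a, μ (Polynomial.C a) = v a)

/-- `h` divides `g` μ-equivalently (`h ∣_μ g`): there is `q` with `μ(g - q h) > μ(g)`. -/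
def MuDvd (μ : Polynomial K → WithTop Λ) (h g : Polynomial K) : Prop :=
  ∃ q : Polynomial K, μ g < μ (g - q * h)

/-- `φ` is μ-minimal: `φ ∤_μ f` for every nonzero `f` of degree less than `deg φ`. -/
def MuMinimal (μ : Polynomial K → WithTop Λ) (φ : Polynomial K) : Prop :=
  ∀ f : Polynomial K, f ≠ 0 → f.degree < φ.degree → ¬ MuDvd μ φ f

/-- `φ` is μ-irreducible: the principal ideal generated by `in_μ φ` in the graded
algebra is a nonzero prime ideal (stated via μ-divisibility). -/
def MuIrreducible (μ : Polynomial K → WithTop Λ) (φ : Polynomial K) : Prop :=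
  μ φ ≠ ⊤ ∧ ¬ MuDvd μ φ 1 ∧
    ∀ f g : Polynomial K, MuDvd μ φ (f * g) → MuDvd μ φ f ∨ MuDvd μ φ g

/-- A (MacLane–Vaquié) key polynomial for `μ`. -/
def KeyPoly (μ : Polynomial K → WithTop Λ) (φ : Polynomial K) : Prop :=
  φ.Monic ∧ MuMinimal μ φ ∧ MuIrreducible μ φ

/-- `μ'` is the augmented valuation `[μ; φ, γ]`: on φ-expansions
`f = Σ a_s φ^s` (with `deg a_s < deg φ`), `μ' f = min_s (μ(a_s) + s·γ)`. -/
def AugVal (μ : Polynomial K → WithTop Λ) (φ : Polynomial K) (γ : WithTop Λ)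
    (μ' : Polynomial K → WithTop Λ) : Prop :=
  ∀ (f : Polynomial K) (n : ℕ) (a : ℕ → Polynomial K),
    (∀ s, (a s).degree < φ.degree) →
    f = ∑ s ∈ Finset.range n, a s * φ ^ s →
    μ' f = (Finset.range n).inf fun s => μ (a s) + s • γ


/-! Regard `μ` as an additive valuation of `K[x]`. For a μ-minimal monic `φ`, φ-adic expansions
compute `μ`: if `deg b < k deg φ` then `μ (b + y φ^k) = min (μ b) (μ y + k μ(φ))`, since a
cancellation between `b mod φ` and the rest would make `φ` μ-divide a nonzero polynomial of smaller
degree. Expanding `f ^ deg φ = (f ^ deg φ - φ ^ deg f) + φ ^ deg f` gives the inequality, and, with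
the roles of `f` and `φ` exchanged, equality when `f` is μ-minimal.

Conversely, under equality `F = f ^ deg φ` has the degree and the value of `φ ^ m`, `m = deg f`, so
`F = b + (φ + a) φ^(m-1)` with `deg b < (m-1) deg φ`, `deg a < deg φ` and `μ a ≥ μ φ`. Split
`q = Q + c φ^k` with `deg Q < k deg φ` and `deg c < deg φ`. Either `c φ^k` has value above `μ q`
and can be dropped, or it carries it, and then the coefficient of `φ^(k+m)` in `q F` is
`c + (c a div φ)`, which has the value of `c`. By induction on `k`, `μ (H - q F) ≤ μ (q F)`
whenever `deg H < deg F`: `F` is μ-minimal, and then so is `f`. -/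

noncomputable def ExtVal.toAddValuation {v : K → WithTop Λ} {μ : K[X] → WithTop Λ} (hv : IsVal v)
    (hμ : ExtVal v μ) : AddValuation K[X] (WithTop Λ) :=
  AddValuation.of μ (by simpa [(hv.1 0).2 rfl] using hμ.2.2 0) (by simpa [hv.2.1] using hμ.2.2 1)
    hμ.2.1 hμ.1

theorem WithTop.nsmul_ne_top {α : Type*} [AddMonoid α] {a : WithTop α} (h : a ≠ ⊤) (n : ℕ) :
    n • a ≠ ⊤ := by
  lift a to α using h
  exact WithTop.coe_ne_top (a := n • a)

theorem WithTop.nsmul_top {α : Type*} [AddMonoid α] {n : ℕ} (hn : n ≠ 0) :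
    n • (⊤ : WithTop α) = ⊤ := by
  obtain ⟨k, rfl⟩ := Nat.exists_eq_succ_of_ne_zero hn
  rw [succ_nsmul, WithTop.add_top]

namespace Polynomial

theorem degree_divByMonic_lt_of_degree_lt_mul {p q r : K[X]} (hq : q.Monic) (hr : r ≠ 0)
    (h : p.degree < (q * r).degree) : (p /ₘ q).degree < r.degree := by
  rcases lt_or_ge p.degree q.degree with hpq | hqp
  · rw [(divByMonic_eq_zero_iff hq).2 hpq, degree_zero]
    exact bot_lt_iff_ne_bot.2 (degree_ne_bot.2 hr)
  · rw [← degree_add_divByMonic hq hqp, degree_mul] at h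
    exact (WithBot.add_lt_add_iff_left (degree_ne_bot.2 hq.ne_zero)).1 h

theorem degree_mul_lt_degree_mul {p q P Q : K[X]} (hp : p.degree < P.degree)
    (hq : q.degree ≤ Q.degree) (hQ : Q ≠ 0) : (p * q).degree < (P * Q).degree := by
  rcases eq_or_ne q 0 with rfl | hq0
  · rw [mul_zero, degree_zero, bot_lt_iff_ne_bot, degree_ne_bot]
    exact mul_ne_zero (ne_zero_of_degree_gt hp) hQ
  rw [degree_mul, degree_mul]
  exact WithBot.add_lt_add_of_lt_of_le (degree_ne_bot.2 hq0) hp hq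

theorem natDegree_mul_divByMonic_lt {p q a : K[X]} (hq : q.Monic) (ha : a.degree < q.degree)
    (h : p * a /ₘ q ≠ 0) : (p * a /ₘ q).natDegree < p.natDegree := by
  have hqpa : q.degree ≤ (p * a).degree := not_lt.1 fun h' => h ((divByMonic_eq_zero_iff hq).2 h')
  have ha0 : a ≠ 0 := by
    rintro rfl
    exact h (by rw [mul_zero, zero_divByMonic])
  have h1 := natDegree_divByMonic (p * a) hq
  have h2 := natDegree_mul_le (p := p) (q := a)
  have h3 := natDegree_le_natDegree hqpa
  have h4 := natDegree_lt_natDegree ha0 ha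
  omega

theorem Monic.degree_pow_le_degree_pow {p : K[X]} (hp : p.Monic) {a b : ℕ} (hab : a ≤ b) :
    (p ^ a).degree ≤ (p ^ b).degree := by
  rw [degree_pow, degree_pow]
  exact nsmul_le_nsmul_left (zero_le_degree_iff.2 hp.ne_zero) hab

theorem Monic.degree_sub_lt_of_degree_eq {p q : K[X]} (hp : p.Monic) (hq : q.Monic)
    (h : p.degree = q.degree) : (p - q).degree < q.degree :=
  h ▸ degree_sub_lt_left h hp.ne_zero (by rw [hp.leadingCoeff, hq.leadingCoeff])

theorem degree_pow_natDegree_comm {f g : K[X]} (hf : f ≠ 0) (hg : g ≠ 0) :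
    (f ^ g.natDegree).degree = (g ^ f.natDegree).degree := by
  rw [degree_pow, degree_pow, degree_eq_natDegree hf, degree_eq_natDegree hg, nsmul_eq_mul,
    nsmul_eq_mul, mul_comm]

theorem add_divByMonic {q : K[X]} (hq : q.Monic) (p₁ p₂ : K[X]) :
    (p₁ + p₂) /ₘ q = p₁ /ₘ q + p₂ /ₘ q := by
  refine (div_modByMonic_unique _ (p₁ %ₘ q + p₂ %ₘ q) hq ⟨?_, ?_⟩).1
  · linear_combination modByMonic_add_div p₁ q + modByMonic_add_div p₂ q
  · exact (degree_add_le _ _).trans_lt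
      (max_lt (degree_modByMonic_lt _ hq) (degree_modByMonic_lt _ hq))

end Polynomial

section MuMinimal

open Polynomial

variable {μ : AddValuation K[X] (WithTop Λ)} {φ : K[X]}

theorem MuMinimal.map_add_mul (hφ : MuMinimal μ φ) {a : K[X]} (ha : a.degree < φ.degree)
    (y : K[X]) : μ (a + y * φ) = min (μ a) (μ y + μ φ) := by
  rw [← μ.map_mul]
  refine le_antisymm ?_ (μ.map_add _ _)
  by_contra! h
  rcases eq_or_ne a 0 with rfl | ha0
  · simp at h
  have hval : μ a = μ (y * φ) := by
    by_contra hne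
    exact h.ne (μ.map_add_of_distinct_val hne).symm
  refine hφ a ha0 ha ⟨-y, ?_⟩
  rw [← hval, min_self] at h
  rwa [neg_mul, sub_neg_eq_add]

theorem MuMinimal.map_add_mul_pow (hφm : φ.Monic) (hφ : MuMinimal μ φ) {k : ℕ} {b : K[X]}
    (hb : b.degree < (φ ^ k).degree) (y : K[X]) :
    μ (b + y * φ ^ k) = min (μ b) (μ y + k • μ φ) := by
  induction k generalizing b y with
  | zero =>
    rw [pow_zero, degree_one, Nat.WithBot.lt_zero_iff, degree_eq_bot] at hb
    simp [hb]
  | succ k ih =>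
    have hdiv : (b /ₘ φ).degree < (φ ^ k).degree :=
      degree_divByMonic_lt_of_degree_lt_mul hφm (hφm.pow k).ne_zero (by rwa [← pow_succ'])
    have hmod := degree_modByMonic_lt b hφm
    have hb' : b = b %ₘ φ + (b /ₘ φ) * φ := by rw [mul_comm, modByMonic_add_div]
    have hμb : μ b = min (μ (b %ₘ φ)) (μ (b /ₘ φ) + μ φ) := by
      conv_lhs => rw [hb']
      exact hφ.map_add_mul hmod _
    have hsplit : b + y * φ ^ (k + 1) = b %ₘ φ + (b /ₘ φ + y * φ ^ k) * φ := by
      nth_rw 1 [hb']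
      ring
    rw [hsplit, hφ.map_add_mul hmod, ih hdiv, hμb, ← min_add_add_right, min_assoc, succ_nsmul,
      add_assoc]

theorem MuMinimal.natDegree_nsmul_le (hφm : φ.Monic) (hφ : MuMinimal μ φ) {f : K[X]}
    (hf : f.Monic) : φ.natDegree • μ f ≤ f.natDegree • μ φ := by
  have hdeg : (f ^ φ.natDegree - φ ^ f.natDegree).degree < (φ ^ f.natDegree).degree :=
    (hf.pow _).degree_sub_lt_of_degree_eq (hφm.pow _)
      (degree_pow_natDegree_comm hf.ne_zero hφm.ne_zero)
  calc φ.natDegree • μ f = μ (f ^ φ.natDegree - φ ^ f.natDegree + 1 * φ ^ f.natDegree) := by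
        rw [one_mul, sub_add_cancel, μ.map_pow]
    _ = min (μ (f ^ φ.natDegree - φ ^ f.natDegree)) (μ 1 + f.natDegree • μ φ) :=
        hφ.map_add_mul_pow hφm hdeg 1
    _ ≤ f.natDegree • μ φ := by
        rw [μ.map_one, zero_add]
        exact min_le_right _ _

theorem MuMinimal.map_le_map_mul_divByMonic (hφm : φ.Monic) (hφ : MuMinimal μ φ)
    (hμφ : μ φ ≠ ⊤) {a : K[X]} (hμa : μ φ ≤ μ a) (y : K[X]) : μ y ≤ μ (y * a /ₘ φ) := by
  have h := hφ.map_add_mul (degree_modByMonic_lt (y * a) hφm) (y * a /ₘ φ)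
  rw [mul_comm _ φ, modByMonic_add_div, μ.map_mul] at h
  rw [← WithTop.add_le_add_iff_right hμφ]
  calc μ y + μ φ ≤ μ y + μ a := add_le_add_right hμa _
    _ = min _ _ := h
    _ ≤ _ := min_le_right _ _

/- Descent: the carry `N x = x a /ₘ φ` never lowers `μ`, lowers the degree and commutes with
`x ↦ x + N x`, so by induction `μ (x + N x) ≤ μ (N x)`; then use `x = (x + N x) - N x`. -/
theorem MuMinimal.map_add_mul_divByMonic (hφm : φ.Monic) (hφ : MuMinimal μ φ) (hμφ : μ φ ≠ ⊤)
    {a : K[X]} (ha : a.degree < φ.degree) (hμa : μ φ ≤ μ a) (x : K[X]) :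
    μ (x + x * a /ₘ φ) = μ x := by
  have hle := hφ.map_le_map_mul_divByMonic hφm hμφ hμa
  refine le_antisymm ?_ ((le_min le_rfl (hle x)).trans (μ.map_add _ _))
  induction hd : x.natDegree using Nat.strong_induction_on generalizing x with
  | _ d ih =>
    rcases eq_or_ne (x * a /ₘ φ) 0 with h0 | h0
    · rw [h0, add_zero]
    have hN : μ (x + x * a /ₘ φ) ≤ μ (x * a /ₘ φ) := by
      calc μ (x + x * a /ₘ φ) ≤ μ ((x + x * a /ₘ φ) * a /ₘ φ) := hle _
        _ = μ (x * a /ₘ φ + (x * a /ₘ φ) * a /ₘ φ) := by rw [add_mul, add_divByMonic hφm]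
        _ ≤ μ (x * a /ₘ φ) := ih _ (hd ▸ natDegree_mul_divByMonic_lt hφm ha h0) _ rfl
    calc μ (x + x * a /ₘ φ) = min (μ (x + x * a /ₘ φ)) (μ (x * a /ₘ φ)) := (min_eq_left hN).symm
      _ ≤ μ (x + x * a /ₘ φ - x * a /ₘ φ) := μ.map_sub _ _
      _ = μ x := by rw [add_sub_cancel_right]

theorem MuMinimal.map_sub_add_mul_pow_mul_le (hφm : φ.Monic) (hφ : MuMinimal μ φ)
    (hμφ : μ φ ≠ ⊤) {a b F : K[X]} {m : ℕ} (ha : a.degree < φ.degree) (hμa : μ φ ≤ μ a)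
    (hb : b.degree < (φ ^ m).degree) (hF : F = b + (φ + a) * φ ^ m)
    (hFdeg : F.degree = (φ ^ (m + 1)).degree) {c Q H : K[X]} {k : ℕ}
    (hc : c.degree < φ.degree) (hQ : Q.degree < (φ ^ k).degree)
    (hH : H.degree < (φ ^ (k + m + 1)).degree) :
    μ (H - (Q + c * φ ^ k) * F) ≤ μ c + (k + m + 1) • μ φ := by
  set R := Q * F + c * b * φ ^ k + (c * a %ₘ φ) * φ ^ (k + m)
  have hsplit : H - (Q + c * φ ^ k) * F = H - R + -(c + c * a /ₘ φ) * φ ^ (k + m + 1) := by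
    simp only [R, hF]
    linear_combination (φ ^ (k + m)) * modByMonic_add_div (c * a) φ
  have hR : R.degree < (φ ^ (k + m + 1)).degree := by
    have h1 : (Q * F).degree < (φ ^ k * φ ^ (m + 1)).degree :=
      degree_mul_lt_degree_mul hQ hFdeg.le (hφm.pow _).ne_zero
    have h2 : (c * b * φ ^ k).degree < (φ * φ ^ m * φ ^ k).degree :=
      degree_mul_lt_degree_mul (degree_mul_lt_degree_mul hc hb.le (hφm.pow _).ne_zero) le_rfl
        (hφm.pow _).ne_zero
    have h3 : ((c * a %ₘ φ) * φ ^ (k + m)).degree < (φ * φ ^ (k + m)).degree :=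
      degree_mul_lt_degree_mul (degree_modByMonic_lt _ hφm) le_rfl (hφm.pow _).ne_zero
    rw [← pow_add, show k + (m + 1) = k + m + 1 by ring] at h1
    rw [← pow_succ', ← pow_add, show m + 1 + k = k + m + 1 by ring] at h2
    rw [← pow_succ'] at h3
    exact (degree_add_le _ _).trans_lt (max_lt ((degree_add_le _ _).trans_lt (max_lt h1 h2)) h3)
  have hHR : (H - R).degree < (φ ^ (k + m + 1)).degree :=
    (degree_sub_le _ _).trans_lt (max_lt hH hR)
  rw [hsplit, hφ.map_add_mul_pow hφm hHR, μ.map_neg, hφ.map_add_mul_divByMonic hφm hμφ ha hμa]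
  exact min_le_right _ _

theorem MuMinimal.map_sub_mul_le (hφm : φ.Monic) (hφ : MuMinimal μ φ) (hμφ : μ φ ≠ ⊤)
    {a b F : K[X]} {m : ℕ} (ha : a.degree < φ.degree) (hμa : μ φ ≤ μ a)
    (hb : b.degree < (φ ^ m).degree) (hF : F = b + (φ + a) * φ ^ m)
    (hFdeg : F.degree = (φ ^ (m + 1)).degree) (hμF : μ F = (m + 1) • μ φ) {H : K[X]}
    (hH : H.degree < F.degree) {k : ℕ} {q : K[X]} (hq : q.degree < (φ ^ k).degree) :
    μ (H - q * F) ≤ μ (q * F) := by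
  induction k generalizing q with
  | zero =>
    rw [pow_zero, degree_one, Nat.WithBot.lt_zero_iff, degree_eq_bot] at hq
    simp [hq]
  | succ k ih =>
    set Q := q %ₘ φ ^ k
    set c := q /ₘ φ ^ k
    have hqQc : q = Q + c * φ ^ k := by rw [mul_comm, modByMonic_add_div]
    have hQ : Q.degree < (φ ^ k).degree := degree_modByMonic_lt _ (hφm.pow k)
    have hc : c.degree < φ.degree :=
      degree_divByMonic_lt_of_degree_lt_mul (hφm.pow k) hφm.ne_zero (by rwa [← pow_succ])
    have hμq : μ q = min (μ Q) (μ c + k • μ φ) := by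
      conv_lhs => rw [hqQc]
      exact hφ.map_add_mul_pow hφm hQ c
    rcases lt_or_ge (μ Q) (μ c + k • μ φ) with hlt | hge
    · have hQF : μ (H - Q * F) < μ (c * φ ^ k * F) := by
        refine (ih hQ).trans_lt ?_
        rw [μ.map_mul, μ.map_mul, μ.map_mul, μ.map_pow]
        exact WithTop.add_lt_add_right (hμF ▸ WithTop.nsmul_ne_top hμφ _) hlt
      calc μ (H - q * F) = μ (H - Q * F - c * φ ^ k * F) := by rw [hqQc]; ring_nf
        _ = μ (H - Q * F) := μ.map_sub_eq_of_lt_left hQF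
        _ ≤ μ (Q * F) := ih hQ
        _ = μ (q * F) := by rw [μ.map_mul, μ.map_mul, hμq, min_eq_left hlt.le]
    · have hH' : H.degree < (φ ^ (k + m + 1)).degree :=
        hH.trans_le (hFdeg ▸ hφm.degree_pow_le_degree_pow (by omega))
      calc μ (H - q * F) = μ (H - (Q + c * φ ^ k) * F) := by rw [← hqQc]
        _ ≤ μ c + (k + m + 1) • μ φ :=
          hφ.map_sub_add_mul_pow_mul_le hφm hμφ ha hμa hb hF hFdeg hc hQ hH'
        _ = μ (q * F) := by
          rw [μ.map_mul, hμq, min_eq_right hge, hμF, add_assoc k, add_nsmul, add_assoc]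

theorem MuMinimal.of_degree_eq_of_map_eq (hφm : φ.Monic) (hφ : MuMinimal μ φ) (hμφ : μ φ ≠ ⊤)
    {F : K[X]} (hF : F.Monic) {m : ℕ} (hdeg : F.degree = (φ ^ m).degree)
    (hμF : μ F = m • μ φ) : MuMinimal μ F := by
  intro H hH0 hHF ⟨q, hq⟩
  have hH : 0 ≤ H.degree := zero_le_degree_iff.2 hH0
  obtain ⟨m, rfl⟩ : ∃ m', m = m' + 1 := Nat.exists_eq_succ_of_ne_zero <| by
    rintro rfl
    rw [hdeg, pow_zero, degree_one] at hHF
    exact hHF.not_ge hH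
  have hφ1 : φ.natDegree ≠ 0 := by
    rw [Ne, hφm.natDegree_eq_zero]
    rintro rfl
    rw [hdeg, one_pow, degree_one] at hHF
    exact hHF.not_ge hH
  set D := F - φ ^ (m + 1)
  have hD : D.degree < (φ ^ (m + 1)).degree := hF.degree_sub_lt_of_degree_eq (hφm.pow _) hdeg
  set a := D /ₘ φ ^ m
  set b := D %ₘ φ ^ m
  have ha : a.degree < φ.degree :=
    degree_divByMonic_lt_of_degree_lt_mul (hφm.pow m) hφm.ne_zero (by rwa [← pow_succ])
  have hb : b.degree < (φ ^ m).degree := degree_modByMonic_lt _ (hφm.pow m)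
  have hFab : F = b + (φ + a) * φ ^ m := by
    linear_combination (modByMonic_add_div D (φ ^ m)).symm
  have hμa : μ φ ≤ μ a := by
    have h1 := hφ.map_add_mul_pow hφm hD 1
    have h2 := hφ.map_add_mul_pow hφm hb a
    rw [one_mul, sub_add_cancel, hμF] at h1
    rw [mul_comm a, modByMonic_add_div] at h2
    have h3 : μ φ + m • μ φ ≤ μ a + m • μ φ := by
      rw [← succ_nsmul']
      exact h1.le.trans ((min_le_left _ _).trans (h2.le.trans (min_le_right _ _)))
    exact (WithTop.add_le_add_iff_right (WithTop.nsmul_ne_top hμφ m)).1 h3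
  have hqk : q.degree < (φ ^ (q.natDegree + 1)).degree := by
    rw [degree_eq_natDegree (hφm.pow _).ne_zero, hφm.natDegree_pow]
    refine degree_le_natDegree.trans_lt (WithBot.coe_lt_coe.2 ?_)
    exact q.natDegree.lt_succ_self.trans_le (Nat.le_mul_of_pos_right _ (Nat.pos_of_ne_zero hφ1))
  have hqF : μ (q * F) = μ H := μ.map_eq_of_lt_sub (by rwa [μ.map_sub_swap])
  have hle := hφ.map_sub_mul_le hφm hμφ ha hμa hb hFab hdeg hμF hHF hqk
  exact (hq.trans_le (hle.trans hqF.le)).false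

theorem MuMinimal.of_pow {f : K[X]} (hμf : μ f ≠ ⊤) {n : ℕ} (hn : n ≠ 0)
    (h : MuMinimal μ (f ^ n)) : MuMinimal μ f := by
  intro g hg0 hgf ⟨q, hq⟩
  obtain ⟨n, rfl⟩ := Nat.exists_eq_succ_of_ne_zero hn
  have hf0 : f ≠ 0 := by
    rintro rfl
    exact hμf μ.map_zero
  refine h (g * f ^ n) (mul_ne_zero hg0 (pow_ne_zero _ hf0)) ?_ ⟨q, ?_⟩
  · rw [pow_succ']
    exact degree_mul_lt_degree_mul hgf le_rfl (pow_ne_zero _ hf0)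
  · rw [show g * f ^ n - q * f ^ (n + 1) = (g - q * f) * f ^ n by ring, μ.map_mul, μ.map_mul]
    exact WithTop.add_lt_add_right (μ.map_pow f n ▸ WithTop.nsmul_ne_top hμf n) hq

theorem MuIrreducible.natDegree_ne_zero (hφm : φ.Monic) (hφ : MuIrreducible μ φ) :
    φ.natDegree ≠ 0 := by
  rw [Ne, hφm.natDegree_eq_zero]
  rintro rfl
  exact hφ.2.1 ⟨1, by simp⟩

end MuMinimal

theorem value_degree_bound_general (v : K → WithTop Λ) (μ : Polynomial K → WithTop Λ)
    (hv : IsVal v) (hμ : ExtVal v μ)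
    (φ : Polynomial K) (hφ : KeyPoly μ φ)
    (f : Polynomial K) (hf : f.Monic) :
    φ.natDegree • μ f ≤ f.natDegree • μ φ ∧
      (φ.natDegree • μ f = f.natDegree • μ φ ↔ MuMinimal μ f) := by
  let ν := hμ.toAddValuation hv
  change φ.natDegree • ν f ≤ f.natDegree • ν φ ∧
    (φ.natDegree • ν f = f.natDegree • ν φ ↔ MuMinimal ν f)
  obtain ⟨hφm, hφmin, hφirr⟩ : φ.Monic ∧ MuMinimal ν φ ∧ MuIrreducible ν φ := hφ
  have hle : φ.natDegree • ν f ≤ f.natDegree • ν φ := hφmin.natDegree_nsmul_le hφm hf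
  refine ⟨hle, fun heq => ?_, fun hfmin => hle.antisymm (hfmin.natDegree_nsmul_le hf hφm)⟩
  have hn := hφirr.natDegree_ne_zero hφm
  have hνf : ν f ≠ ⊤ := fun h =>
    WithTop.nsmul_ne_top hφirr.1 _ (by rw [← heq, h, WithTop.nsmul_top hn])
  refine MuMinimal.of_pow hνf hn (hφmin.of_degree_eq_of_map_eq hφm hφirr.1 (hf.pow _)
    (m := f.natDegree) (degree_pow_natDegree_comm hf.ne_zero hφm.ne_zero) ?_)
  rw [ν.map_pow, heq]

/-- for a key polynomial `φ` and a monic non-constant `f`,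
`μ(f)/deg f ≤ μ(φ)/deg φ`, interpreted as `deg(φ)·μ(f) ≤ deg(f)·μ(φ)`,
with equality iff `f` is μ-minimal. -/
theorem value_degree_bound (v : K → WithTop Λ) (μ : Polynomial K → WithTop Λ)
    (hv : IsVal v) (hμ : ExtVal v μ)
    (hsupp : ∀ f : Polynomial K, f ≠ 0 → μ f ≠ ⊤)
    (φ : Polynomial K) (hφ : KeyPoly μ φ)
    (f : Polynomial K) (hf : f.Monic) (hdeg : 0 < f.degree) :
    φ.natDegree • μ f ≤ f.natDegree • μ φ ∧
      (φ.natDegree • μ f = f.natDegree • μ φ ↔ MuMinimal μ f) :=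
  value_degree_bound_general v μ hv hμ φ hφ f hf
end

section
/- Let μ' = [μ; φ, γ] be an augmented valuation with γ < ∞. Then the support of μ' is trivial (μ'⁻¹(∞) = 0); if instead γ = ∞, the support of μ' is the principal ideal φK[x]. -/
/-
A key polynomial does not μ-divide `1`, whereas `1` does, so the monic `φ` has positive degree
and every `f` has a `φ`-expansion `f = Σ aₛ φˢ` (iterated division by `φ`). Then
`μ' f = minₛ (μ aₛ + s γ)` is infinite exactly when every term is, and since `μ` has trivial
support, `μ aₛ = ∞` only for `aₛ = 0`. If `γ < ∞` all coefficients must vanish, so `f = 0`; if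
`γ = ∞` every term with `s ≥ 1` is infinite anyway, so the condition is `a₀ = f mod φ = 0`.
-/

open Polynomial Finset

variable {K : Type*} [Field K] {Λ : Type*} [AddCommGroup Λ] [LinearOrder Λ] [IsOrderedAddMonoid Λ]

theorem WithTop.nsmul_eq_top_iff {Λ : Type*} [AddMonoid Λ] {γ : WithTop Λ} {s : ℕ} :
    s • γ = ⊤ ↔ s ≠ 0 ∧ γ = ⊤ := by
  induction γ with
  | top => induction s with
    | zero => simp
    | succ k ih => simp [succ_nsmul]
  | coe c => simp [← WithTop.coe_nsmul]

theorem Polynomial.exists_sum_mul_pow_of_monic {R : Type*} [CommRing R] [Nontrivial R]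
    {φ : R[X]} (hm : φ.Monic) (hd : 0 < φ.degree) (f : R[X]) :
    ∃ (n : ℕ) (a : ℕ → R[X]), (∀ s, (a s).degree < φ.degree) ∧
      f = ∑ s ∈ range (n + 1), a s * φ ^ s ∧ a 0 = f %ₘ φ := by
  induction f using (InvImage.wf degree wellFounded_lt).induction with
  | _ f ih =>
  obtain rfl | hf := eq_or_ne f 0
  · exact ⟨0, 0, fun _ => bot_le.trans_lt hd, by simp, by simp⟩
  obtain ⟨n, b, hb, hsum, -⟩ := ih (f /ₘ φ) (degree_divByMonic_lt f φ hf hd)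
  refine ⟨n + 1, fun s => s.casesOn (f %ₘ φ) b, ?_, ?_, rfl⟩
  · rintro (_ | s)
    exacts [degree_modByMonic_lt f hm, hb s]
  · rw [sum_range_succ', pow_zero, mul_one]
    simp_rw [pow_succ, ← mul_assoc, ← sum_mul, ← hsum]
    rw [mul_comm, add_comm]
    exact (modByMonic_add_div f φ).symm

omit [IsOrderedAddMonoid Λ] in
theorem ExtVal.map_zero {v : K → WithTop Λ} {μ : K[X] → WithTop Λ} (hv : IsVal v)
    (hμ : ExtVal v μ) : μ 0 = ⊤ := by
  rw [← C_0, hμ.2.2, hv.1]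

omit [AddCommGroup Λ] [IsOrderedAddMonoid Λ] in
theorem KeyPoly.degree_pos {μ : K[X] → WithTop Λ} {φ : K[X]} (hφ : KeyPoly μ φ)
    (hμ0 : μ 0 = ⊤) (hμ1 : μ 1 ≠ ⊤) : 0 < φ.degree := by
  by_contra! h
  obtain rfl := hφ.1.degree_le_zero_iff_eq_one.mp h
  exact hφ.2.2.2.1 ⟨1, by simpa [hμ0] using hμ1.lt_top⟩

omit [IsOrderedAddMonoid Λ] in
theorem AugVal.apply_eq_top_iff {μ μ' : K[X] → WithTop Λ} {φ : K[X]} {γ : WithTop Λ}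
    (haug : AugVal μ φ γ μ') {f : K[X]} {n : ℕ} {a : ℕ → K[X]}
    (ha : ∀ s, (a s).degree < φ.degree) (hf : f = ∑ s ∈ range n, a s * φ ^ s) :
    μ' f = ⊤ ↔ ∀ s < n, μ (a s) = ⊤ ∨ s ≠ 0 ∧ γ = ⊤ := by
  simp only [haug f n a ha hf, Finset.inf_eq_top_iff, mem_range, WithTop.add_eq_top,
    WithTop.nsmul_eq_top_iff]

theorem augmentation_support_general (v : K → WithTop Λ) (μ : Polynomial K → WithTop Λ)
    (hv : IsVal v) (hμ : ExtVal v μ)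
    (hsupp : ∀ f : Polynomial K, f ≠ 0 → μ f ≠ ⊤)
    (φ : Polynomial K) (hφ : KeyPoly μ φ)
    (γ : WithTop Λ)
    (μ' : Polynomial K → WithTop Λ) (haug : AugVal μ φ γ μ') :
    (γ ≠ ⊤ → ∀ f : Polynomial K, μ' f = ⊤ ↔ f = 0) ∧
      (γ = ⊤ → ∀ f : Polynomial K, μ' f = ⊤ ↔ φ ∣ f) := by
  have hμ0 : μ 0 = ⊤ := hμ.map_zero hv
  have hμ_eq_top : ∀ f, μ f = ⊤ ↔ f = 0 :=
    fun f => ⟨fun h => by_contra fun hf => hsupp f hf h, by rintro rfl; exact hμ0⟩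
  have hdeg : 0 < φ.degree := hφ.degree_pos hμ0 (hsupp 1 one_ne_zero)
  refine ⟨fun hγ f => ⟨fun htop => ?_, ?_⟩, fun hγ f => ?_⟩
  · obtain ⟨n, a, ha, rfl, -⟩ := exists_sum_mul_pow_of_monic hφ.1 hdeg f
    simp only [haug.apply_eq_top_iff ha rfl, hμ_eq_top, hγ, and_false, or_false] at htop
    exact sum_eq_zero fun s hs => by rw [htop s (mem_range.mp hs), zero_mul]
  · rintro rfl
    exact (haug.apply_eq_top_iff (n := 0) (a := 0) (fun _ => bot_le.trans_lt hdeg)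
      (by simp)).mpr (by simp)
  · obtain ⟨n, a, ha, hf, ha0⟩ := exists_sum_mul_pow_of_monic hφ.1 hdeg f
    rw [haug.apply_eq_top_iff ha hf, ← modByMonic_eq_zero_iff_dvd hφ.1, ← ha0, ← hμ_eq_top,
      Nat.forall_lt_succ_left]
    simp [hγ]

/-- if `γ < ∞`, the augmented valuation `μ' = [μ; φ, γ]` has trivial
support; if `γ = ∞`, its support is the principal ideal `φ K[x]`. -/
theorem augmentation_support (v : K → WithTop Λ) (μ : Polynomial K → WithTop Λ)
    (hv : IsVal v) (hμ : ExtVal v μ)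
    (hsupp : ∀ f : Polynomial K, f ≠ 0 → μ f ≠ ⊤)
    (φ : Polynomial K) (hφ : KeyPoly μ φ)
    (γ : WithTop Λ) (hγ : μ φ < γ)
    (μ' : Polynomial K → WithTop Λ) (haug : AugVal μ φ γ μ') :
    (γ ≠ ⊤ → ∀ f : Polynomial K, μ' f = ⊤ ↔ f = 0) ∧
      (γ = ⊤ → ∀ f : Polynomial K, μ' f = ⊤ ↔ φ ∣ f) :=
  augmentation_support_general v μ hv hμ hsupp φ hφ γ μ' haug
end

section
/- Let ρ < μ be valuations on K[x] taking values in the same ordered group Λ (ρ(f) ≤ μ(f) for all f, with strict inequality somewhere), and let φ be a monic polynomial of minimal degree among those satisfying ρ(φ) < μ(φ). Then for any nonzero f ∈ K[x], ρ(f) = μ(f) if and only if φ does not ρ-divide f. -/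
open Polynomial Finset

variable {K : Type*} [Field K] {Λ : Type*} [AddCommGroup Λ] [LinearOrder Λ] [IsOrderedAddMonoid Λ]

/-! Since `ρ ≤ μ`, every multiple `qφ` with `ρ(qφ) ≠ ⊤` has `ρ(qφ) < μ(qφ)`, while by minimality
of `deg φ` the valuations agree in degree `< deg φ`. A `ρ`-divisibility `ρ(f - qφ) > ρ f` makes
`ρ f = ρ(qφ)`, so both summands of `f = (f - qφ) + qφ` have `μ`-value above `ρ f`. Conversely, if
`ρ f < μ f`, the remainder `r = f - qφ` of division by `φ` has `ρ r = μ r`, and `ρ r ≤ ρ f` would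
give `ρ f = ρ(qφ) < μ(qφ) = μ r = ρ r`. -/

namespace ExtVal

variable {v : K → WithTop Λ} {ρ : K[X] → WithTop Λ}

theorem map_neg_one (hv : IsVal v) (hρ : ExtVal v ρ) : ρ (-1) = 0 := by
  have hsq : ρ (-1) + ρ (-1) = 0 := by
    rw [← hρ.1, neg_one_mul, neg_neg, ← C_1, hρ.2.2, hv.2.1]
  obtain ⟨a, ha⟩ := WithTop.ne_top_iff_exists.mp
    (WithTop.add_ne_top.mp (hsq ▸ WithTop.zero_ne_top)).1
  rw [← ha] at hsq ⊢
  exact_mod_cast two_nsmul_eq_zero.mp (by rw [two_nsmul]; exact_mod_cast hsq)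

theorem map_neg (hv : IsVal v) (hρ : ExtVal v ρ) (f : K[X]) : ρ (-f) = ρ f := by
  rw [← neg_one_mul, hρ.1, hρ.map_neg_one hv, zero_add]

theorem map_sub_comm (hv : IsVal v) (hρ : ExtVal v ρ) (f g : K[X]) : ρ (f - g) = ρ (g - f) := by
  rw [← neg_sub, hρ.map_neg hv]

theorem map_add_eq_of_lt (hv : IsVal v) (hρ : ExtVal v ρ) {f g : K[X]} (h : ρ f < ρ g) :
    ρ (f + g) = ρ f := by
  refine le_antisymm ?_ (min_eq_left h.le ▸ hρ.2.1 f g)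
  have hf : min (ρ (f + g)) (ρ g) ≤ ρ f := by
    simpa only [add_neg_cancel_right, hρ.map_neg hv] using hρ.2.1 (f + g) (-g)
  exact (min_le_iff.mp hf).resolve_right h.not_ge

theorem map_eq_of_lt_map_sub (hv : IsVal v) (hρ : ExtVal v ρ) {f g : K[X]}
    (h : ρ f < ρ (f - g)) : ρ g = ρ f := by
  rw [hρ.map_sub_comm hv] at h
  simpa only [add_sub_cancel] using hρ.map_add_eq_of_lt hv h

end ExtVal

section Gap

variable {v : K → WithTop Λ} {ρ μ : K[X] → WithTop Λ} {φ : K[X]}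

omit [IsOrderedAddMonoid Λ] in
theorem map_eq_of_degree_lt_of_minimal (hρ : ExtVal v ρ) (hμ : ExtVal v μ)
    (hle : ∀ f, ρ f ≤ μ f) (hmin : ∀ g : K[X], g.Monic → ρ g < μ g → φ.degree ≤ g.degree)
    {r : K[X]} (hr : r.degree < φ.degree) : ρ r = μ r := by
  by_cases hr0 : r = 0
  · rw [hr0, ← C_0, hρ.2.2, hμ.2.2]
  have hmonic : (C r.leadingCoeff⁻¹ * r).Monic := by
    rw [mul_comm]; exact monic_mul_leadingCoeff_inv hr0
  have hnormalized : ρ (C r.leadingCoeff⁻¹ * r) = μ (C r.leadingCoeff⁻¹ * r) := by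
    refine (hle _).eq_of_not_lt fun hlt => (hmin _ hmonic hlt).not_gt ?_
    rwa [degree_C_mul (inv_ne_zero (leadingCoeff_ne_zero.mpr hr0))]
  have hr_eq : r = C r.leadingCoeff * (C r.leadingCoeff⁻¹ * r) := by
    rw [← mul_assoc, ← C_mul, mul_inv_cancel₀ (leadingCoeff_ne_zero.mpr hr0), C_1, one_mul]
  rw [congrArg ρ hr_eq, congrArg μ hr_eq, hρ.1, hμ.1, hρ.2.2, hμ.2.2, hnormalized]

theorem map_mul_lt_of_map_lt (hρ : ExtVal v ρ) (hμ : ExtVal v μ) (hle : ∀ f, ρ f ≤ μ f)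
    (hφ : ρ φ < μ φ) {q : K[X]} (hq : ρ (q * φ) ≠ ⊤) : ρ (q * φ) < μ (q * φ) := by
  rw [hρ.1] at hq ⊢
  calc ρ q + ρ φ < ρ q + μ φ := WithTop.add_lt_add_left (WithTop.add_ne_top.mp hq).1 hφ
    _ ≤ μ q + μ φ := add_le_add_left (hle q) _
    _ = μ (q * φ) := (hμ.1 q φ).symm

theorem map_lt_of_muDvd (hv : IsVal v) (hρ : ExtVal v ρ) (hμ : ExtVal v μ)
    (hle : ∀ f, ρ f ≤ μ f) (hφ : ρ φ < μ φ) {f : K[X]} (hdvd : MuDvd ρ φ f) : ρ f < μ f := by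
  obtain ⟨q, hq⟩ := hdvd
  have hqφ : ρ (q * φ) = ρ f := hρ.map_eq_of_lt_map_sub hv hq
  have hgap : ρ f < μ (q * φ) :=
    hqφ ▸ map_mul_lt_of_map_lt hρ hμ hle hφ (hqφ ▸ ne_top_of_lt hq)
  calc ρ f < min (μ (f - q * φ)) (μ (q * φ)) := lt_min (hq.trans_le (hle _)) hgap
    _ ≤ μ (f - q * φ + q * φ) := hμ.2.1 _ _
    _ = μ f := by rw [sub_add_cancel]

theorem muDvd_of_map_lt (hv : IsVal v) (hρ : ExtVal v ρ) (hμ : ExtVal v μ)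
    (hle : ∀ f, ρ f ≤ μ f) (hmonic : φ.Monic) (hφ : ρ φ < μ φ)
    (hmin : ∀ g : K[X], g.Monic → ρ g < μ g → φ.degree ≤ g.degree)
    {f : K[X]} (hf : ρ f < μ f) : MuDvd ρ φ f := by
  refine ⟨f /ₘ φ, ?_⟩
  set q := f /ₘ φ
  set r := f %ₘ φ
  have hr_eq : f - q * φ = r := by
    rw [mul_comm]; exact (modByMonic_eq_sub_mul_div f φ).symm
  have hf_eq : f = r + q * φ := by rw [← hr_eq, sub_add_cancel]
  have hr : ρ r = μ r :=
    map_eq_of_degree_lt_of_minimal hρ hμ hle hmin (degree_modByMonic_lt f hmonic)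
  rw [hr_eq]
  by_contra! hrf
  have hμr : μ r < μ (r - -(q * φ)) := by
    rw [sub_neg_eq_add, ← hf_eq]; exact hr ▸ hrf.trans_lt hf
  have hμqφ : μ (q * φ) = μ r := hμ.map_neg hv _ ▸ hμ.map_eq_of_lt_map_sub hv hμr
  have hgap : ρ (q * φ) < ρ r := hr ▸ hμqφ ▸ map_mul_lt_of_map_lt hρ hμ hle hφ
    (ne_top_of_le_ne_top (hμqφ ▸ ne_top_of_lt hμr) (hle _))
  have hρf : ρ f = ρ (q * φ) := by rw [hf_eq, add_comm, hρ.map_add_eq_of_lt hv hgap]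
  exact (hρf ▸ hgap).not_ge hrf

end Gap

theorem gap_equality_general (v : K → WithTop Λ) (ρ μ : Polynomial K → WithTop Λ)
    (hv : IsVal v) (hρ : ExtVal v ρ) (hμ : ExtVal v μ)
    (hle : ∀ f : Polynomial K, ρ f ≤ μ f)
    (φ : Polynomial K) (hmonic : φ.Monic) (hφ : ρ φ < μ φ)
    (hmin : ∀ g : Polynomial K, g.Monic → ρ g < μ g → φ.degree ≤ g.degree) :
    ∀ f : Polynomial K, f ≠ 0 → (ρ f = μ f ↔ ¬ MuDvd ρ φ f) := by
  intro f _
  rw [← not_iff_not, not_not, ← Ne, ← (hle f).lt_iff_ne]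
  exact ⟨muDvd_of_map_lt hv hρ hμ hle hmonic hφ hmin, map_lt_of_muDvd hv hρ hμ hle hφ⟩

/-- if `ρ < μ` and `φ` is a monic polynomial of minimal degree with
`ρ(φ) < μ(φ)`, then for nonzero `f`: `ρ(f) = μ(f)` iff `φ` does not ρ-divide `f`. -/
theorem gap_equality (v : K → WithTop Λ) (ρ μ : Polynomial K → WithTop Λ)
    (hv : IsVal v) (hρ : ExtVal v ρ) (hμ : ExtVal v μ)
    (hle : ∀ f : Polynomial K, ρ f ≤ μ f) (hne : ρ ≠ μ)
    (φ : Polynomial K) (hmonic : φ.Monic) (hφ : ρ φ < μ φ)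
    (hmin : ∀ g : Polynomial K, g.Monic → ρ g < μ g → φ.degree ≤ g.degree) :
    ∀ f : Polynomial K, f ≠ 0 → (ρ f = μ f ↔ ¬ MuDvd ρ φ f) :=
  gap_equality_general v ρ μ hv hρ hμ hle φ hmonic hφ hmin
end

section
/- Let μ be a valuation on K[x], φ a key polynomial for μ, and μ' = [μ; φ, γ] with μ(φ) < γ < ∞. Then for any Λ-valued valuation ρ with μ < ρ < μ', there exists δ ∈ Λ with μ(φ) < δ < γ such that ρ = [μ; φ, δ]. Conversely, every [μ; φ, δ] with μ(φ) < δ < γ satisfies μ < [μ;φ,δ] < μ'. -/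
open Polynomial Finset

variable {K : Type*} [Field K] {Λ : Type*} [AddCommGroup Λ] [LinearOrder Λ] [IsOrderedAddMonoid Λ]

/-!
If `μ ≤ ρ ≤ μ' = [μ; φ, γ]`, then `ρ` agrees with `μ` in degrees below `deg φ`, and `φ` stays
`ρ`-minimal, because `μ'(a + qφ) ≤ μ(a)` for `deg a < deg φ`. A valuation for which `φ` is
minimal is determined by its values in degrees below `deg φ` and at `φ`: writing
`f = a₀ + qφ`, minimality gives `ρ(f) ≤ ρ(a₀)`, hence also `ρ(f) ≤ ρ(qφ)`, and induction on the
length of the `φ`-expansion yields `ρ = [μ; φ, ρ(φ)]`. Augmentations are monotone in, and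
determined by, the augmentation value, which pins down `μ(φ) < ρ(φ) < γ`.
-/

set_option linter.unusedSectionVars false

section Valuation

variable {v : K → WithTop Λ} {μ : K[X] → WithTop Λ}

lemma IsVal.map_neg_one (hv : IsVal v) : v (-1) = 0 := by
  have hsq : v (-1) + v (-1) = 0 := by rw [← hv.2.2.1, neg_mul_neg, one_mul, hv.2.1]
  obtain ⟨a, ha⟩ := WithTop.ne_top_iff_exists.mp fun h : v (-1) = ⊤ => by simp [h] at hsq
  rw [← ha, ← WithTop.coe_add, WithTop.coe_eq_zero] at hsq
  rw [← ha, WithTop.coe_eq_zero, ← two_nsmul_eq_zero, two_nsmul, hsq]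

variable (hv : IsVal v) (hμ : ExtVal v μ)
include hv hμ

lemma ExtVal.map_zero_s9 : μ 0 = ⊤ := by
  rw [← C_0, hμ.2.2, hv.1]

lemma ExtVal.map_one : μ 1 = 0 := by
  rw [← C_1, hμ.2.2, hv.2.1]

lemma ExtVal.map_neg_s9 (f : K[X]) : μ (-f) = μ f := by
  rw [neg_eq_neg_one_mul, ← C_1, ← C_neg, hμ.1, hμ.2.2, hv.map_neg_one, zero_add]

lemma ExtVal.map_pow (f : K[X]) (n : ℕ) : μ (f ^ n) = n • μ f := by
  induction n with
  | zero => rw [pow_zero, zero_nsmul, hμ.map_one hv]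
  | succ n ih => rw [pow_succ, hμ.1, ih, succ_nsmul]

lemma ExtVal.inf_le_map_sum (n : ℕ) (t : ℕ → K[X]) :
    (range n).inf (fun s => μ (t s)) ≤ μ (∑ s ∈ range n, t s) := by
  induction n with
  | zero => simp [hμ.map_zero_s9 hv]
  | succ n ih =>
    rw [sum_range_succ, range_add_one, inf_insert]
    exact (le_min (inf_le_right.trans ih) inf_le_left).trans (hμ.2.1 _ _)

lemma ExtVal.map_add_le_right {f g : K[X]} (h : μ (f + g) ≤ μ f) : μ (f + g) ≤ μ g := by
  have := hμ.2.1 (f + g) (-f)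
  rwa [hμ.map_neg_s9 hv, add_neg_cancel_comm, min_eq_left h] at this

end Valuation

section Expansion

variable {R : Type*} [CommRing R]

lemma sum_range_succ_mul_pow (φ : R[X]) (c : ℕ → R[X]) (n : ℕ) :
    ∑ s ∈ range (n + 1), c s * φ ^ s = c 0 + (∑ s ∈ range n, c (s + 1) * φ ^ s) * φ := by
  simp only [sum_range_succ', pow_succ, sum_mul, mul_assoc, pow_zero, mul_one, add_comm]

lemma sum_range_succ_mul_pow_cons (φ a : R[X]) (b : ℕ → R[X]) (n : ℕ) :
    ∑ s ∈ range (n + 1), (if s = 0 then a else b (s - 1)) * φ ^ s =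
      a + (∑ s ∈ range n, b s * φ ^ s) * φ := by
  rw [sum_range_succ_mul_pow]
  simp

variable [Nontrivial R] {φ : R[X]} (hφ : φ.Monic) (hφ0 : 0 < φ.degree)
include hφ hφ0

lemma exists_expansion (f : R[X]) :
    ∃ (n : ℕ) (a : ℕ → R[X]), (∀ s, (a s).degree < φ.degree) ∧
      f = ∑ s ∈ range n, a s * φ ^ s := by
  induction hN : f.natDegree using Nat.strong_induction_on generalizing f with
  | _ N ih =>
  by_cases hlt : f.degree < φ.degree
  · exact ⟨1, fun _ => f, fun _ => hlt, by simp⟩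
  have hdeg : (f /ₘ φ).natDegree < N := by
    have := natDegree_le_natDegree (not_lt.mp hlt)
    have := natDegree_pos_iff_degree_pos.mpr hφ0
    rw [natDegree_divByMonic f hφ]
    omega
  obtain ⟨n, b, hb, hq⟩ := ih _ hdeg (f /ₘ φ) rfl
  refine ⟨n + 1, fun s => if s = 0 then f %ₘ φ else b (s - 1), fun s => ?_, ?_⟩
  · dsimp only
    split_ifs
    exacts [degree_modByMonic_lt f hφ, hb _]
  · rw [sum_range_succ_mul_pow_cons, ← hq, mul_comm, modByMonic_add_div]

lemma exists_expansion_add_mul {a : R[X]} (ha : a.degree < φ.degree) (q : R[X]) :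
    ∃ (n : ℕ) (c : ℕ → R[X]), (∀ s, (c s).degree < φ.degree) ∧ c 0 = a ∧
      a + q * φ = ∑ s ∈ range n, c s * φ ^ s ∧ 0 < n := by
  obtain ⟨n, b, hb, rfl⟩ := exists_expansion hφ hφ0 q
  refine ⟨n + 1, fun s => if s = 0 then a else b (s - 1), fun s => ?_, rfl,
    (sum_range_succ_mul_pow_cons φ a b n).symm, n.succ_pos⟩
  dsimp only
  split_ifs
  exacts [ha, hb _]

end Expansion

namespace AugVal

variable {μ w w' : K[X] → WithTop Λ} {φ : K[X]} {θ θ' : WithTop Λ}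

lemma apply_of_degree_lt (hw : AugVal μ φ θ w) {a : K[X]} (ha : a.degree < φ.degree) :
    w a = μ a := by
  simpa using hw a 1 (fun _ => a) (fun _ => ha) (by simp)

lemma apply_self (hμ0 : μ 0 = ⊤) (hμ1 : μ 1 = 0) (hφ0 : 0 < φ.degree)
    (hw : AugVal μ φ θ w) : w φ = θ := by
  have hc : ∀ s, (if s = 1 then 1 else 0 : K[X]).degree < φ.degree := fun s => by
    split_ifs
    · rwa [degree_one]
    · exact degree_zero.trans_lt (bot_lt_of_lt hφ0)
  rw [hw φ 2 _ hc (by simp)]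
  simp [range_add_one, hμ0, hμ1]

variable (hφ : φ.Monic) (hφ0 : 0 < φ.degree)
include hφ hφ0

lemma apply_add_mul_le (hw : AugVal μ φ θ w) {a : K[X]} (ha : a.degree < φ.degree) (q : K[X]) :
    w (a + q * φ) ≤ μ a := by
  obtain ⟨n, c, hc, hc0, he, hn⟩ := exists_expansion_add_mul hφ hφ0 ha q
  rw [hw _ n c hc he]
  simpa [hc0] using inf_le (f := fun s => μ (c s) + s • θ) (mem_range.mpr hn)

lemma mono (hθ : θ ≤ θ') (hw : AugVal μ φ θ w) (hw' : AugVal μ φ θ' w') (f : K[X]) :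
    w f ≤ w' f := by
  obtain ⟨n, a, ha, hf⟩ := exists_expansion hφ hφ0 f
  rw [hw f n a ha hf, hw' f n a ha hf]
  exact inf_mono_fun fun s _ => add_le_add_right (nsmul_le_nsmul_right hθ s) _

lemma unique (hw : AugVal μ φ θ w) (hw' : AugVal μ φ θ w') : w = w' :=
  funext fun f => (hw.mono hφ hφ0 le_rfl hw' f).antisymm (hw'.mono hφ hφ0 le_rfl hw f)

end AugVal

section Minimal

variable {v : K → WithTop Λ} {μ ρ : K[X] → WithTop Λ} {φ : K[X]}

lemma MuMinimal.map_add_mul_le (hv : IsVal v) (hρ : ExtVal v ρ) (hmin : MuMinimal ρ φ)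
    {a : K[X]} (ha : a.degree < φ.degree) (q : K[X]) : ρ (a + q * φ) ≤ ρ a := by
  rcases eq_or_ne a 0 with rfl | ha0
  · simp [hρ.map_zero_s9 hv]
  · exact not_lt.mp fun h => hmin a ha0 ha ⟨-q, by rwa [neg_mul, sub_neg_eq_add]⟩

lemma MuMinimal.map_sum_le (hv : IsVal v) (hρ : ExtVal v ρ) (hmin : MuMinimal ρ φ)
    (n : ℕ) (a : ℕ → K[X]) (ha : ∀ s, (a s).degree < φ.degree) {s : ℕ} (hs : s < n) :
    ρ (∑ i ∈ range n, a i * φ ^ i) ≤ ρ (a s * φ ^ s) := by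
  induction n generalizing a s with
  | zero => exact absurd hs (Nat.not_lt_zero s)
  | succ n ih =>
    rw [sum_range_succ_mul_pow]
    set q := ∑ i ∈ range n, a (i + 1) * φ ^ i
    have hle₀ : ρ (a 0 + q * φ) ≤ ρ (a 0) := hmin.map_add_mul_le hv hρ (ha 0) q
    have hle₁ : ρ (a 0 + q * φ) ≤ ρ (q * φ) := hρ.map_add_le_right hv hle₀
    cases s with
    | zero => simpa using hle₀
    | succ t =>
      calc ρ (a 0 + q * φ) ≤ ρ q + ρ φ := hρ.1 q φ ▸ hle₁
        _ ≤ ρ (a (t + 1) * φ ^ t) + ρ φ :=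
          add_le_add_left (ih (fun i => a (i + 1)) (fun i => ha _) (s := t) (by omega)) _
        _ = ρ (a (t + 1) * φ ^ (t + 1)) := by rw [← hρ.1, mul_assoc, ← pow_succ]

lemma MuMinimal.augVal (hv : IsVal v) (hρ : ExtVal v ρ) (hmin : MuMinimal ρ φ)
    (hlow : ∀ a : K[X], a.degree < φ.degree → ρ a = μ a) : AugVal μ φ (ρ φ) ρ := by
  intro f n a ha hf
  have hterm : ∀ s, ρ (a s * φ ^ s) = μ (a s) + s • ρ φ := fun s => by
    rw [hρ.1, hρ.map_pow hv, hlow _ (ha s)]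
  subst hf
  refine le_antisymm (Finset.le_inf fun s hs => ?_) ?_
  · rw [← hterm]
    exact hmin.map_sum_le hv hρ n a ha (mem_range.mp hs)
  · simp only [← hterm]
    exact hρ.inf_le_map_sum hv n _

lemma AugVal.eq_of_le_of_le {w : K[X] → WithTop Λ} {θ : WithTop Λ} (hw : AugVal μ φ θ w)
    (hμρ : ∀ f, μ f ≤ ρ f) (hρw : ∀ f, ρ f ≤ w f) {a : K[X]} (ha : a.degree < φ.degree) :
    ρ a = μ a :=
  ((hρw a).trans (hw.apply_of_degree_lt ha).le).antisymm (hμρ a)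

lemma AugVal.muMinimal_of_le_of_le {w : K[X] → WithTop Λ} {θ : WithTop Λ} (hφ : φ.Monic)
    (hφ0 : 0 < φ.degree) (hw : AugVal μ φ θ w) (hμρ : ∀ f, μ f ≤ ρ f) (hρw : ∀ f, ρ f ≤ w f) :
    MuMinimal ρ φ := by
  rintro a - ha ⟨q, hq⟩
  have hle : ρ (a - q * φ) ≤ μ a := by
    rw [sub_eq_add_neg, ← neg_mul]
    exact (hρw _).trans (hw.apply_add_mul_le hφ hφ0 ha (-q))
  exact (hq.trans_le hle).ne (hw.eq_of_le_of_le hμρ hρw ha)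

lemma KeyPoly.degree_pos_s9 (hv : IsVal v) (hμ : ExtVal v μ) (hφ : KeyPoly μ φ) :
    0 < φ.degree := by
  refine natDegree_pos_iff_degree_pos.mp (Nat.pos_of_ne_zero fun h => hφ.2.2.2.1 ⟨1, ?_⟩)
  rw [hφ.1.natDegree_eq_zero.mp h, mul_one, sub_self, hμ.map_zero_s9 hv, hμ.map_one hv]
  exact WithTop.coe_lt_top 0

end Minimal

theorem interval_of_ordinary_augmentation_general (v : K → WithTop Λ)
    (μ : Polynomial K → WithTop Λ) (hv : IsVal v) (hμ : ExtVal v μ)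
    (φ : Polynomial K) (hφ : KeyPoly μ φ)
    (γ : Λ)
    (μ' : Polynomial K → WithTop Λ) (haug : AugVal μ φ (γ : WithTop Λ) μ') :
    (∀ ρ : Polynomial K → WithTop Λ, ExtVal v ρ →
        (∀ f, μ f ≤ ρ f) → μ ≠ ρ → (∀ f, ρ f ≤ μ' f) → ρ ≠ μ' →
        ∃ δ : Λ, μ φ < (δ : WithTop Λ) ∧ δ < γ ∧ AugVal μ φ (δ : WithTop Λ) ρ) ∧
    (∀ δ : Λ, μ φ < (δ : WithTop Λ) → δ < γ →
        ∀ ρ : Polynomial K → WithTop Λ, AugVal μ φ (δ : WithTop Λ) ρ →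
        (∀ f, μ f ≤ ρ f) ∧ μ ≠ ρ ∧ (∀ f, ρ f ≤ μ' f) ∧ ρ ≠ μ') := by
  have hφ0 := hφ.degree_pos_s9 hv hμ
  have hμaug : AugVal μ φ (μ φ) μ := hφ.2.1.augVal hv hμ fun _ _ => rfl
  have hμ'φ : μ' φ = γ := haug.apply_self (hμ.map_zero_s9 hv) (hμ.map_one hv) hφ0
  refine ⟨fun ρ hρ hμρ hμne hρμ' hρne => ?_, fun δ hδμ hδγ ρ hρ => ?_⟩
  · obtain ⟨δ, hδ⟩ : ∃ δ : Λ, ↑δ = ρ φ :=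
      WithTop.ne_top_iff_exists.mp (ne_top_of_le_ne_top (by simp [hμ'φ]) (hρμ' φ))
    have hmin : MuMinimal ρ φ := haug.muMinimal_of_le_of_le hφ.1 hφ0 hμρ hρμ'
    have hρaug : AugVal μ φ δ ρ :=
      hδ ▸ hmin.augVal hv hρ fun _ ha => haug.eq_of_le_of_le hμρ hρμ' ha
    have hδγ : (δ : WithTop Λ) ≤ γ := hδ ▸ hμ'φ ▸ hρμ' φ
    refine ⟨δ, (hδ ▸ hμρ φ).lt_of_ne fun h => hμne (hμaug.unique hφ.1 hφ0 (h ▸ hρaug)),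
      WithTop.coe_lt_coe.mp (hδγ.lt_of_ne fun h => hρne (hρaug.unique hφ.1 hφ0 (h ▸ haug))),
      hρaug⟩
  · have hρφ : ρ φ = δ := hρ.apply_self (hμ.map_zero_s9 hv) (hμ.map_one hv) hφ0
    refine ⟨hμaug.mono hφ.1 hφ0 hδμ.le hρ, fun h => hδμ.ne (hρφ ▸ congrFun h φ),
      hρ.mono hφ.1 hφ0 (WithTop.coe_le_coe.mpr hδγ.le) haug, fun h => hδγ.ne ?_⟩
    exact WithTop.coe_injective (hρφ.symm.trans ((congrFun h φ).trans hμ'φ))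

/-- the valuations strictly between `μ` and `μ' = [μ; φ, γ]`
(`μ(φ) < γ < ∞`) are exactly the augmentations `[μ; φ, δ]` with `μ(φ) < δ < γ`. -/
theorem interval_of_ordinary_augmentation (v : K → WithTop Λ)
    (μ : Polynomial K → WithTop Λ) (hv : IsVal v) (hμ : ExtVal v μ)
    (φ : Polynomial K) (hφ : KeyPoly μ φ)
    (γ : Λ) (hγ : μ φ < (γ : WithTop Λ))
    (μ' : Polynomial K → WithTop Λ) (haug : AugVal μ φ (γ : WithTop Λ) μ') :
    (∀ ρ : Polynomial K → WithTop Λ, ExtVal v ρ →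
        (∀ f, μ f ≤ ρ f) → μ ≠ ρ → (∀ f, ρ f ≤ μ' f) → ρ ≠ μ' →
        ∃ δ : Λ, μ φ < (δ : WithTop Λ) ∧ δ < γ ∧ AugVal μ φ (δ : WithTop Λ) ρ) ∧
    (∀ δ : Λ, μ φ < (δ : WithTop Λ) → δ < γ →
        ∀ ρ : Polynomial K → WithTop Λ, AugVal μ φ (δ : WithTop Λ) ρ →
        (∀ f, μ f ≤ ρ f) ∧ μ ≠ ρ ∧ (∀ f, ρ f ≤ μ' f) ∧ ρ ≠ μ') :=
  interval_of_ordinary_augmentation_general v μ hv hμ φ hφ γ μ' haug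
end
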